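/- The Rota-Baxter algebra (kF_X^a, ⋄_a, B⁺) together with the map i_X : X → kF_X^a, x ↦ •x• (the length-2 forest of two single-vertex trees with angle decorated by x), is the free non-commutative unitary Rota-Baxter algebra of weight λ on X: for any unitary Rota-Baxter k-algebra (R, P) of weight λ and any set map f : X → R, there is a unique homomorphism of unitary Rota-Baxter algebras f̄ : kF_X^a → R (a unital k-algebra homomorphism with f̄ ∘ B⁺ = P ∘ f̄) such that f̄ ∘ i_X = f. -/

import Mathlib

set_option linter.unreachableTactic false
set_option linter.unnecessarySeqFocus false
set_option linter.unusedTactic false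

/-! Angularly decorated planar rooted trees and forests over a decoration set `X`.
A tree is either the single-vertex tree `•` (leaf) or the grafting `B⁺(F)` of a forest;
a forest is an alternating word `T₁ x₁ T₂ x₂ ⋯ x_{ℓ-1} T_ℓ` of trees and decorations. -/
mutual
  inductive ATree (X : Type) : Type
    | leaf : ATree X
    | graft : AForest X → ATree X
  inductive AForest (X : Type) : Type
    | single : ATree X → AForest X
    | cons : ATree X → X → AForest X → AForest X
end

mutual
  /-- Depth of an angularly decorated tree. -/
  def ATree.depth {X : Type} : ATree X → ℕ
    | .leaf => 0
    | .graft F => AForest.depth F + 1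
  /-- Depth of an angularly decorated forest. -/
  def AForest.depth {X : Type} : AForest X → ℕ
    | .single T => ATree.depth T
    | .cons T _ F => max (ATree.depth T) (AForest.depth F)
end

mutual
  /-- An auxiliary size of an angularly decorated tree. -/
  def ATree.size {X : Type} : ATree X → ℕ
    | .leaf => 1
    | .graft F => AForest.size F + 1
  /-- An auxiliary size of an angularly decorated forest. -/
  def AForest.size {X : Type} : AForest X → ℕ
    | .single T => ATree.size T + 1
    | .cons T _ F => ATree.size T + AForest.size F + 1
end

mutual
  /-- The number of vertices of an angularly decorated tree. -/
  def ATree.deg {X : Type} : ATree X → ℕ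
    | .leaf => 1
    | .graft F => AForest.deg F + 1
  /-- The number of vertices of an angularly decorated forest. -/
  def AForest.deg {X : Type} : AForest X → ℕ
    | .single T => ATree.deg T
    | .cons T _ F => ATree.deg T + AForest.deg F
end

/-- Auxiliary lemma for termination proofs. -/
theorem natlex_of_le_of_lt {a₁ a₂ b₁ b₂ : ℕ} (h1 : a₁ ≤ a₂) (h2 : b₁ < b₂) :
    Prod.Lex (fun x y : ℕ => x < y) (fun x y : ℕ => x < y) (a₁, b₁) (a₂, b₂) := by
  rcases lt_or_eq_of_le h1 with h | rfl
  · exact Prod.Lex.left _ _ h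
  · exact Prod.Lex.right _ h2

/-- `RBF k X` is the free `k`-module on the set of angularly decorated rooted forests. -/
abbrev RBF (k X : Type) [CommRing k] := AForest X →₀ k

mutual
  /-- The product `⋄ₐ` on basis trees (with values in the free module on trees). -/
  noncomputable def mulT {k X : Type} [CommRing k] (lam : k) :
      ATree X → ATree X → (ATree X →₀ k)
    | .leaf, T' => Finsupp.single T' 1
    | T, .leaf => Finsupp.single T 1
    | .graft F, .graft F' =>
        Finsupp.mapDomain ATree.graft (mulF lam (.single (.graft F)) F')
          + Finsupp.mapDomain ATree.graft (mulF lam F (.single (.graft F')))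
          + lam • Finsupp.mapDomain ATree.graft (mulF lam F F')
  termination_by T T' => (ATree.depth T + ATree.depth T', ATree.size T + ATree.size T')
  decreasing_by
    all_goals
      first
        | (apply Prod.Lex.left
           simp [ATree.depth, AForest.depth] <;> omega)
        | (apply natlex_of_le_of_lt <;>
            simp [ATree.depth, AForest.depth, ATree.size, AForest.size] <;>
            omega)
  /-- The product `⋄ₐ` on basis forests. -/
  noncomputable def mulF {k X : Type} [CommRing k] (lam : k) :
      AForest X → AForest X → RBF k X
    | .single T, .single T' => Finsupp.mapDomain AForest.single (mulT lam T T')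
    | .single T, .cons T' y G' =>
        Finsupp.mapDomain (fun t => AForest.cons t y G') (mulT lam T T')
    | .cons T x G, F' => Finsupp.mapDomain (fun g => AForest.cons T x g) (mulF lam G F')
  termination_by F F' => (AForest.depth F + AForest.depth F', AForest.size F + AForest.size F')
  decreasing_by
    all_goals
      first
        | (apply Prod.Lex.left
           simp [ATree.depth, AForest.depth] <;> omega)
        | (apply natlex_of_le_of_lt <;>
            simp [ATree.depth, AForest.depth, ATree.size, AForest.size] <;>
            omega)
end

open scoped TensorProduct

variable {k X : Type} [CommRing k]

/-- The unit `•` of the Rota-Baxter algebra `kF_X^a`: the single-vertex tree. -/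
noncomputable def RBF.one : RBF k X := Finsupp.single (AForest.single ATree.leaf) 1

/-- The canonical basis inclusion of forests into `kF_X^a`. -/
noncomputable def RBF.of (F : AForest X) : RBF k X := Finsupp.single F 1

/-- The natural map `i_X : X → kF_X^a`, `x ↦ • x •`. -/
noncomputable def RBF.iX (x : X) : RBF k X :=
  RBF.of (AForest.cons ATree.leaf x (AForest.single ATree.leaf))

/-- The grafting operator `B⁺` as a `k`-linear operator on `kF_X^a`. -/
noncomputable def RBF.Bplus : RBF k X →ₗ[k] RBF k X :=
  Finsupp.lmapDomain k k (fun F => AForest.single (ATree.graft F))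

/-- The multiplication `⋄ₐ` on `kF_X^a` as a `k`-bilinear map. -/
noncomputable def RBF.mul (lam : k) : RBF k X →ₗ[k] RBF k X →ₗ[k] RBF k X :=
  Finsupp.lift _ k _ fun F => Finsupp.lift _ k _ fun F' => mulF lam F F'

/-- Concatenation of two forests with the angle between them decorated by `x`. -/
def concatA (x : X) : AForest X → AForest X → AForest X
  | .single T, F' => .cons T x F'
  | .cons T y G, F' => .cons T y (concatA x G F')

/-- Concatenation with middle angle decorated by `x`, as a bilinear map on `kF_X^a`. -/
noncomputable def RBF.concat (x : X) : RBF k X →ₗ[k] RBF k X →ₗ[k] RBF k X :=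
  Finsupp.lift _ k _ fun F => Finsupp.lift _ k _ fun F' => RBF.of (concatA x F F')

/-- Given two bilinear maps `f g` on a module `M`, the bilinear map on `M ⊗ M` sending
`(a ⊗ b, c ⊗ d)` to `f a c ⊗ g b d`. -/
noncomputable def mixMap {M : Type} [AddCommGroup M] [Module k M]
    (f g : M →ₗ[k] M →ₗ[k] M) :
    (M ⊗[k] M) →ₗ[k] (M ⊗[k] M) →ₗ[k] (M ⊗[k] M) :=
  TensorProduct.curry
    ((TensorProduct.map (TensorProduct.lift f) (TensorProduct.lift g)).comp
      (TensorProduct.tensorTensorTensorComm k M M M M).toLinearMap)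

mutual
  /-- The angular coproduct of a basis tree: the sum of `cl(H) ⊗ T/H` over all
  subforests `H ⊑ T` (sequences of mutually disjoint full subtrees and bare angular
  decorations in planar order). -/
  noncomputable def coT (lam : k) : ATree X → RBF k X ⊗[k] RBF k X
    | .leaf => RBF.one ⊗ₜ[k] RBF.one
    | .graft F => (RBF.of (AForest.single (ATree.graft F))) ⊗ₜ[k] RBF.one
        + (LinearMap.lTensor (RBF k X) RBF.Bplus) (coF lam F)
  /-- The angular coproduct of a basis forest: the sum of `cl(H) ⊗ F/H` over all
  subforests `H ⊑ F`. -/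
  noncomputable def coF (lam : k) : AForest X → RBF k X ⊗[k] RBF k X
    | .single T => coT lam T
    | .cons T x G =>
        mixMap (RBF.concat x) (RBF.mul lam) (coT lam T) (coF lam G)
          + mixMap (RBF.mul lam) (RBF.concat x) (coT lam T) (coF lam G)
end

/-- The angular coproduct `Δₐ : kF_X^a → kF_X^a ⊗ kF_X^a`,
`Δₐ(F) = Σ_{H ⊑ F} cl(H) ⊗ F/H`. -/
noncomputable def RBF.Delta (lam : k) : RBF k X →ₗ[k] RBF k X ⊗[k] RBF k X :=
  Finsupp.lift _ k _ fun F => coF lam F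

/-- The counit `εₐ : kF_X^a → k` sending the single-vertex tree `•` to `1` and every
other forest to `0`. -/
noncomputable def RBF.eps : RBF k X →ₗ[k] k :=
  Finsupp.lift _ k _ fun F =>
    match F with
    | .single .leaf => (1 : k)
    | _ => 0

/-- The unit map `u : k → kF_X^a`, `c ↦ c •`. -/
noncomputable def RBF.unit : k →ₗ[k] RBF k X :=
  LinearMap.toSpanSingleton k (RBF k X) RBF.one

/-! The homomorphism is forced on basis forests: `•` must go to `1`, `B⁺(F)` to `P(φ F)`, and
`T₁x₁⋯x_{ℓ-1}T_ℓ = T₁ ⋄ (•x₁• ⋄ (T₂x₂⋯T_ℓ))` to `φ(T₁) f(x₁) ⋯ f(x_{ℓ-1}) φ(T_ℓ)`; this gives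
uniqueness, and defines `φ`. That `φ` is multiplicative on basis forests follows by the same
recursion on (depth, size) that defines `⋄ₐ`: on two grafted trees the three terms of the
recursive formula are mapped to the three terms of the Rota-Baxter identity for `P`. -/

variable {R : Type} [Ring R] [Algebra k R]

def IsRotaBaxter (lam : k) (P : R →ₗ[k] R) : Prop :=
  ∀ u v : R, P u * P v = P (u * P v) + P (P u * v) + lam • P (u * v)

mutual
  def ATree.eval (f : X → R) (P : R →ₗ[k] R) : ATree X → R
    | .leaf => 1
    | .graft F => P (AForest.eval f P F)
  def AForest.eval (f : X → R) (P : R →ₗ[k] R) : AForest X → R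
    | .single T => ATree.eval f P T
    | .cons T x G => ATree.eval f P T * (f x * AForest.eval f P G)
end

namespace RBF

theorem mul_of_of (lam : k) (F F' : AForest X) :
    RBF.mul lam (RBF.of F) (RBF.of F') = mulF lam F F' := by
  simp [RBF.mul, RBF.of]

theorem Bplus_of (F : AForest X) :
    RBF.Bplus (RBF.of F) = (RBF.of (.single (.graft F)) : RBF k X) := by
  simp [RBF.Bplus, RBF.of]

theorem mulT_leaf_right (lam : k) (T : ATree X) : mulT lam T .leaf = Finsupp.single T 1 := by
  cases T <;> simp [mulT]

theorem mulF_leaf_left (lam : k) (F : AForest X) :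
    mulF lam (.single .leaf) F = (RBF.of F : RBF k X) := by
  cases F <;> simp [mulF, mulT, RBF.of]

theorem mul_iX_of (lam : k) (x : X) (G : AForest X) :
    RBF.mul lam (RBF.iX x) (RBF.of G) = (RBF.of (.cons .leaf x G) : RBF k X) := by
  rw [RBF.iX, mul_of_of, mulF, mulF_leaf_left]
  simp [RBF.of]

theorem of_cons_eq_mul (lam : k) (T : ATree X) (x : X) (G : AForest X) :
    (RBF.of (.cons T x G) : RBF k X) =
      RBF.mul lam (RBF.of (.single T)) (RBF.mul lam (RBF.iX x) (RBF.of G)) := by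
  rw [mul_iX_of, mul_of_of]
  simp [mulF, mulT_leaf_right, RBF.of]

noncomputable def lift (f : X → R) (P : R →ₗ[k] R) : RBF k X →ₗ[k] R :=
  Finsupp.linearCombination k (AForest.eval f P)

variable (f : X → R) (P : R →ₗ[k] R)

@[simp]
theorem lift_of (F : AForest X) : lift f P (RBF.of F) = F.eval f P := by
  simp [lift, RBF.of]

theorem lift_mapDomain_single (c : ATree X →₀ k) :
    lift f P (c.mapDomain .single) = Finsupp.linearCombination k (ATree.eval f P) c := by
  rw [lift, Finsupp.linearCombination_mapDomain]
  rfl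

theorem lift_mapDomain_cons_left (T : ATree X) (x : X) (c : RBF k X) :
    lift f P (c.mapDomain (.cons T x)) = T.eval f P * (f x * lift f P c) := by
  rw [lift, Finsupp.linearCombination_mapDomain]
  simp [Finsupp.linearCombination_apply, Finsupp.mul_sum, AForest.eval]

theorem lift_mapDomain_cons_right (x : X) (G : AForest X) (c : ATree X →₀ k) :
    lift f P (c.mapDomain (.cons · x G)) =
      Finsupp.linearCombination k (ATree.eval f P) c * (f x * G.eval f P) := by
  rw [lift, Finsupp.linearCombination_mapDomain]
  simp [Finsupp.linearCombination_apply, Finsupp.sum_mul, AForest.eval]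

theorem linearCombination_eval_mapDomain_graft (c : RBF k X) :
    Finsupp.linearCombination k (ATree.eval f P) (c.mapDomain .graft) = P (lift f P c) := by
  rw [Finsupp.linearCombination_mapDomain, lift, Finsupp.apply_linearCombination]
  rfl

variable {f P} {lam : k}

mutual
theorem eval_mulT (hP : IsRotaBaxter lam P) : ∀ T T' : ATree X,
    Finsupp.linearCombination k (ATree.eval f P) (mulT lam T T') = T.eval f P * T'.eval f P
  | .leaf, T' => by simp [mulT, ATree.eval]
  | .graft F, .leaf => by simp [mulT, ATree.eval]
  | .graft F, .graft F' => by
      rw [mulT]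
      simp only [map_add, map_smul, linearCombination_eval_mapDomain_graft,
        eval_mulF hP (.single (.graft F)) F', eval_mulF hP F (.single (.graft F')), eval_mulF hP F F']
      simp only [ATree.eval, AForest.eval]
      rw [hP]
      abel
  termination_by T T' => (T.depth + T'.depth, T.size + T'.size)
  decreasing_by
    all_goals
      simp only [ATree.depth, AForest.depth, ATree.size, AForest.size]
      first
        | exact Prod.Lex.left _ _ (by omega)
        | exact natlex_of_le_of_lt (by omega) (by omega)

theorem eval_mulF (hP : IsRotaBaxter lam P) : ∀ F F' : AForest X,
    lift f P (mulF lam F F') = F.eval f P * F'.eval f P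
  | .single T, .single T' => by
      rw [mulF, lift_mapDomain_single, eval_mulT hP T T']
      rfl
  | .single T, .cons T' y G' => by
      rw [mulF, lift_mapDomain_cons_right, eval_mulT hP T T']
      simp only [AForest.eval, mul_assoc]
  | .cons T x G, F' => by
      rw [mulF, lift_mapDomain_cons_left, eval_mulF hP G F']
      simp only [AForest.eval, mul_assoc]
  termination_by F F' => (F.depth + F'.depth, F.size + F'.size)
  decreasing_by
    all_goals
      simp only [AForest.depth, AForest.size]
      first
        | exact Prod.Lex.left _ _ (by omega)
        | exact natlex_of_le_of_lt (by omega) (by omega)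
end

theorem lift_mul (hP : IsRotaBaxter lam P) (a b : RBF k X) :
    lift f P (RBF.mul lam a b) = lift f P a * lift f P b := by
  suffices (RBF.mul lam).compr₂ (lift f P) = (LinearMap.mul k R).compl₁₂ (lift f P) (lift f P) from
    LinearMap.congr_fun₂ this a b
  refine Finsupp.lhom_ext' fun F => LinearMap.ext_ring <| Finsupp.lhom_ext' fun F' =>
    LinearMap.ext_ring ?_
  change lift f P (RBF.mul lam (RBF.of F) (RBF.of F')) = lift f P (RBF.of F) * lift f P (RBF.of F')
  rw [mul_of_of, lift_of, lift_of, eval_mulF hP]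

theorem lift_Bplus (a : RBF k X) : lift f P (RBF.Bplus a) = P (lift f P a) := by
  suffices (lift f P).comp RBF.Bplus = P.comp (lift f P) from LinearMap.congr_fun this a
  refine Finsupp.lhom_ext' fun F => LinearMap.ext_ring ?_
  change lift f P (RBF.Bplus (RBF.of F)) = P (lift f P (RBF.of F))
  rw [Bplus_of, lift_of, lift_of]
  rfl

theorem lift_iX (x : X) : lift f P (RBF.iX x) = f x := by
  simp [RBF.iX, ATree.eval, AForest.eval]

theorem eq_lift_of_isHom (ψ : RBF k X →ₗ[k] R) (h_one : ψ RBF.one = 1)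
    (h_mul : ∀ a b : RBF k X, ψ (RBF.mul lam a b) = ψ a * ψ b)
    (h_Bplus : ∀ a : RBF k X, ψ (RBF.Bplus a) = P (ψ a))
    (h_iX : ∀ x : X, ψ (RBF.iX x) = f x) :
    ψ = lift f P := by
  have h_of (F : AForest X) : ψ (RBF.of F) = F.eval f P := by
    induction F using AForest.rec
      (motive_1 := fun T => ψ (RBF.of (.single T)) = T.eval f P) with
    | leaf => exact h_one
    | graft F ih => rw [← Bplus_of, h_Bplus, ih]; rfl
    | single T ih => exact ih
    | cons T x G ihT ihG => rw [of_cons_eq_mul lam, h_mul, h_mul, h_iX, ihT, ihG]; rfl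
  exact Finsupp.lhom_ext' fun F => LinearMap.ext_ring <| (h_of F).trans (lift_of f P F).symm

end RBF

/-- `(kF_X^a, ⋄ₐ, B⁺)` together with `i_X : X → kF_X^a`, `x ↦ •x•`,
is the free non-commutative unitary Rota-Baxter algebra of weight `λ` on `X`: for any
unitary Rota-Baxter `k`-algebra `(R, P)` of weight `λ` and any map `f : X → R`, there is
a unique `k`-linear map `φ : kF_X^a → R` which is a unital algebra homomorphism
satisfying `φ ∘ B⁺ = P ∘ φ` and `φ ∘ i_X = f`. -/
theorem rbf_is_free_rota_baxter_algebra (k X : Type) [CommRing k] (lam : k)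
    (R : Type) [Ring R] [Algebra k R] (P : R →ₗ[k] R)
    (hP : ∀ u v : R, P u * P v = P (u * P v) + P (P u * v) + lam • P (u * v))
    (f : X → R) :
    ∃! φ : RBF k X →ₗ[k] R,
      φ RBF.one = 1
      ∧ (∀ a b : RBF k X, φ (RBF.mul lam a b) = φ a * φ b)
      ∧ (∀ a : RBF k X, φ (RBF.Bplus a) = P (φ a))
      ∧ (∀ x : X, φ (RBF.iX x) = f x) :=
  ⟨RBF.lift f P, ⟨RBF.lift_of f P _, RBF.lift_mul hP, RBF.lift_Bplus, RBF.lift_iX⟩,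
    fun _ ⟨h_one, h_mul, h_Bplus, h_iX⟩ => RBF.eq_lift_of_isHom _ h_one h_mul h_Bplus h_iX⟩
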